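/- arXiv:2204.10991 — 2 statements merged into one kernel-verified Lean document; each statement's English description precedes it below -/
import Mathlib

section
/- Let L and L' be relational first-order languages (no function or constant symbols), let 𝒜 be an L-structure and ℬ an L'-structure, and suppose 𝒜 is a semi-retract of ℬ via (g, f). Let A be a finite substructure of 𝒜 and let A₀ be the substructure of ℬ with underlying set g(A). If d ≥ 1 is an integer such that ℬ → (C)^{A₀}_{r,d} for every finite substructure C of ℬ and every integer r ≥ 2, then 𝒜 → (B)^A_{r,d} for every finite substructure B of 𝒜 and every integer r ≥ 2; that is, the Ramsey degree of A in 𝒜 is bounded by the Ramsey degree of A₀ in ℬ. -/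
open FirstOrder FirstOrder.Language

/-- Two same-length tuples have the same quantifier-free type over ∅. -/
def SameQfType (L : FirstOrder.Language) (M : Type*) [L.Structure M] {n : ℕ}
    (x y : Fin n → M) : Prop :=
  ∀ φ : L.Formula (Fin n), φ.IsQF → (φ.Realize x ↔ φ.Realize y)

/-- A qftp-respecting injection between structures in possibly different languages. -/
def QftpRespecting (L L' : FirstOrder.Language) (M N : Type*) [L.Structure M] [L'.Structure N]
    (h : M → N) : Prop :=
  Function.Injective h ∧
    ∀ (n : ℕ) (x y : Fin n → M), SameQfType L M x y → SameQfType L' N (h ∘ x) (h ∘ y)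

/-- `(g, f)` is a semi-retraction between `M` and `N`: both maps are qftp-respecting
injections and `f ∘ g` is qftp-preserving (equivalently, an `L`-embedding of `M` into `M`). -/
def IsSemiRetraction (L L' : FirstOrder.Language) (M N : Type*)
    [L.Structure M] [L'.Structure N] (g : M → N) (f : N → M) : Prop :=
  QftpRespecting L L' M N g ∧ QftpRespecting L' L N M f ∧
    ∀ (n : ℕ) (x : Fin n → M), SameQfType L M x (f ∘ g ∘ x)

/-- `M` is locally finite: every finitely generated substructure is finite. -/
def StructLocallyFinite (L : FirstOrder.Language) (M : Type*) [L.Structure M] : Prop :=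
  ∀ S : L.Substructure M, S.FG → (S : Set M).Finite

/-- `M → (B)^A_{r,d}` for substructures. -/
def ArrowSub (L : FirstOrder.Language) (M : Type*) [L.Structure M]
    (A B : L.Substructure M) (r d : ℕ) : Prop :=
  ∀ c : L.Substructure M → Fin r, ∃ B' : L.Substructure M,
    Nonempty (B' ≃[L] B) ∧
      (c '' {A' : L.Substructure M | A' ≤ B' ∧ Nonempty (A' ≃[L] A)}).ncard ≤ d

/-- `M →ᵉ (B)^A_{r,d}` for embeddings. -/
def ArrowEmb (L : FirstOrder.Language) (M : Type*) [L.Structure M]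
    (A B : L.Substructure M) (r d : ℕ) : Prop :=
  ∀ c : (A ↪[L] M) → Fin r, ∃ h : B ↪[L] M,
    (c '' {j : A ↪[L] M | ∃ e : A ↪[L] B, j = h.comp e}).ncard ≤ d

/-- A structure is rigid if its only automorphism is the identity. -/
def IsRigidStructure (L : FirstOrder.Language) (M : Type*) [L.Structure M] : Prop :=
  ∀ σ : M ≃[L] M, ∀ x : M, σ x = x

/-!
Fix a finite `B ≤ 𝒜` and a colouring `c` of the copies of `A` in `𝒜`. Colour a copy `S` of
`A₀` in `ℬ` by `c (f(S))`, and apply the hypothesis to `C = g(B)`: this gives `C' ≅ C` on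
whose copies of `A₀` the new colouring takes at most `d` values. Then `B' = f(C')` is a copy of
`B`, because `f ∘ g` preserves quantifier-free types, and every copy `A'` of `A` inside `B'` is
`f(A₀')` for `A₀' = C' ∩ f⁻¹(A')`, which is a copy of `A₀` lying in `C'`; so `c` takes at most
`d` values on the copies of `A` in `B'`.

All isomorphisms are produced from tuples with equal quantifier-free types: in a relational
language, two enumerations with the same quantifier-free type enumerate isomorphic substructures.
-/

section

variable {L : FirstOrder.Language} {M : Type*} [L.Structure M] {n : ℕ}

namespace SameQfType

theorem symm {x y : Fin n → M} (h : SameQfType L M x y) : SameQfType L M y x :=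
  fun φ hφ => (h φ hφ).symm

theorem trans {x y z : Fin n → M} (hxy : SameQfType L M x y) (hyz : SameQfType L M y z) :
    SameQfType L M x z :=
  fun φ hφ => (hxy φ hφ).trans (hyz φ hφ)

theorem eq_iff {x y : Fin n → M} (h : SameQfType L M x y) (i j : Fin n) :
    x i = x j ↔ y i = y j := by
  simpa using h (Term.equal (Term.var i) (Term.var j)) (BoundedFormula.IsAtomic.equal _ _).isQF

theorem relMap_iff {x y : Fin n → M} (h : SameQfType L M x y) {m : ℕ} (R : L.Relations m)
    (k : Fin m → Fin n) : Structure.RelMap R (x ∘ k) ↔ Structure.RelMap R (y ∘ k) := by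
  simpa [Function.comp_def] using
    h (R.formula fun j => Term.var (k j)) (BoundedFormula.IsAtomic.rel _ _).isQF

end SameQfType

theorem FirstOrder.Language.Embedding.sameQfType_comp {P : Type*} [L.Structure P] (e₁ e₂ : P ↪[L] M)
    (v : Fin n → P) : SameQfType L M (e₁ ∘ v) (e₂ ∘ v) := by
  intro φ hφ
  have realize_comp (e : P ↪[L] M) : φ.Realize (e ∘ v) ↔ φ.Realize v := by
    simpa [Formula.Realize, Unique.eq_default (e ∘ default)] using
      hφ.realize_embedding e (v := v) (xs := default)
  rw [realize_comp, realize_comp]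

theorem SetLike.exists_surjective_lift_of_range_eq {ι α S : Type*} [SetLike S α] {s : S}
    {x : ι → α} (hx : Set.range x = s) :
    ∃ x' : ι → s, Function.Surjective x' ∧ Subtype.val ∘ x' = x := by
  refine ⟨fun i => ⟨x i, by rw [← SetLike.mem_coe, ← hx]; exact ⟨i, rfl⟩⟩, fun a => ?_, rfl⟩
  obtain ⟨i, hi⟩ : (a : α) ∈ Set.range x := hx ▸ a.2
  exact ⟨i, Subtype.ext hi⟩

theorem exists_sameQfType_of_equiv {S T : L.Substructure M} (σ : S ≃[L] T) {x : Fin n → M}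
    (hx : Set.range x = S) : ∃ y : Fin n → M, Set.range y = T ∧ SameQfType L M x y := by
  obtain ⟨x', hx', rfl⟩ := SetLike.exists_surjective_lift_of_range_eq hx
  refine ⟨T.subtype.comp σ.toEmbedding ∘ x', ?_, S.subtype.sameQfType_comp _ x'⟩
  change Set.range (((↑) : T → M) ∘ σ ∘ x') = (T : Set M)
  rw [Set.range_comp, (σ.surjective.comp hx').range_eq, Set.image_univ, Subtype.range_coe]

theorem nonempty_equiv_of_sameQfType [L.IsRelational] {x y : Fin n → M}
    (h : SameQfType L M x y) {S T : L.Substructure M} (hS : Set.range x = S)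
    (hT : Set.range y = T) : Nonempty (S ≃[L] T) := by
  obtain ⟨x', hx', rfl⟩ := SetLike.exists_surjective_lift_of_range_eq hS
  obtain ⟨y', hy', rfl⟩ := SetLike.exists_surjective_lift_of_range_eq hT
  have hker (i j : Fin n) : x' i = x' j ↔ y' i = y' j := by
    simpa only [Subtype.ext_iff, Function.comp_apply] using h.eq_iff i j
  let φ : S → T := y' ∘ Function.surjInv hx'
  have hφ (i : Fin n) : φ (x' i) = y' i := (hker _ _).1 (Function.surjInv_eq hx' (x' i))
  have hφ_bij : Function.Bijective φ := by
    refine ⟨fun a₁ a₂ hφa => ?_, fun b => ?_⟩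
    · obtain ⟨i, rfl⟩ := hx' a₁
      obtain ⟨j, rfl⟩ := hx' a₂
      rwa [hφ, hφ, ← hker] at hφa
    · obtain ⟨i, rfl⟩ := hy' b
      exact ⟨x' i, hφ i⟩
  refine ⟨{ Equiv.ofBijective φ hφ_bij with
    map_fun' := fun {_} F => isEmptyElim F
    map_rel' := fun {m} R v => ?_ }⟩
  obtain ⟨k, rfl⟩ : ∃ k : Fin m → Fin n, x' ∘ k = v :=
    ⟨Function.surjInv hx' ∘ v, funext fun i => Function.surjInv_eq hx' (v i)⟩
  change Structure.RelMap R (φ ∘ x' ∘ k) ↔ Structure.RelMap R (x' ∘ k)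
  rw [← Function.comp_assoc, show φ ∘ x' = y' from funext hφ]
  exact (h.relMap_iff R k).symm

variable {L' : FirstOrder.Language} {N : Type*} [L'.Structure N] {g : M → N} {f : N → M}

namespace IsSemiRetraction

theorem sameQfType_comp_of_sameQfType_comp (hsr : IsSemiRetraction L L' M N g f)
    {x : Fin n → N} {p : Fin n → M} (h : SameQfType L' N x (g ∘ p)) :
    SameQfType L M (f ∘ x) p :=
  (hsr.2.1.2 n x (g ∘ p) h).trans (hsr.2.2 n p).symm

theorem nonempty_equiv_of_equiv_image [L.IsRelational] (hsr : IsSemiRetraction L L' M N g f)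
    {B : L.Substructure M} (hB : (B : Set M).Finite) {C C' : L'.Substructure N}
    (hC : (C : Set N) = g '' B) (σ : C' ≃[L'] C) {B' : L.Substructure M}
    (hB' : (B' : Set M) = f '' C') : Nonempty (B' ≃[L] B) := by
  obtain ⟨n, b, hb⟩ := hB.fin_embedding
  obtain ⟨u, hu, hgbu⟩ := exists_sameQfType_of_equiv σ.symm
    (x := g ∘ b) (by rw [Set.range_comp, hb, hC])
  refine nonempty_equiv_of_sameQfType (hsr.sameQfType_comp_of_sameQfType_comp hgbu.symm) ?_ hb
  rw [Set.range_comp, hu, hB']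

theorem nonempty_equiv_of_embedding_range_subset [L'.IsRelational]
    (hsr : IsSemiRetraction L L' M N g f) {A : L.Substructure M} {A₀ A₀' : L'.Substructure N}
    (hA₀ : (A₀ : Set N) = g '' A) (hfin : (A₀' : Set N).Finite) (e : A₀' ↪[L'] N)
    (he : Set.range e ⊆ Set.range g) {A' : L.Substructure M} (hA' : (A' : Set M) = f '' A₀')
    (τ : A' ≃[L] A) : Nonempty (A₀' ≃[L'] A₀) := by
  obtain ⟨n, u, hu⟩ := hfin.fin_embedding
  obtain ⟨u', -, hu'⟩ := SetLike.exists_surjective_lift_of_range_eq hu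
  choose p hp using fun i => he ⟨u' i, rfl⟩
  have hugp : SameQfType L' N u (g ∘ p) := by
    rw [← hu', show g ∘ p = e ∘ u' from funext hp]
    exact A₀'.subtype.sameQfType_comp e u'
  obtain ⟨a, ha, hfua⟩ := exists_sameQfType_of_equiv τ (x := f ∘ u)
    (by rw [Set.range_comp, hu, hA'])
  have hpa : SameQfType L M p a := (hsr.sameQfType_comp_of_sameQfType_comp hugp).symm.trans hfua
  refine nonempty_equiv_of_sameQfType (hugp.trans (hsr.1.2 n p a hpa)) hu ?_
  rw [Set.range_comp, ha, hA₀]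

theorem exists_le_nonempty_equiv_image_eq [L'.IsRelational]
    (hsr : IsSemiRetraction L L' M N g f) {A : L.Substructure M} {A₀ : L'.Substructure N}
    (hA₀ : (A₀ : Set N) = g '' A) {C C' : L'.Substructure N} (hCfin : (C : Set N).Finite)
    (hC : (C : Set N) ⊆ Set.range g) (σ : C' ≃[L'] C) {A' : L.Substructure M}
    (hA' : (A' : Set M) ⊆ f '' C') (τ : A' ≃[L] A) :
    ∃ A₀' ≤ C', Nonempty (A₀' ≃[L'] A₀) ∧ f '' A₀' = A' := by
  set A₀' := Substructure.closure L' (C' ∩ f ⁻¹' A')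
  have hA₀'C' : A₀' ≤ C' := Substructure.closure_le.2 Set.inter_subset_left
  have hfA₀' : f '' A₀' = A' := by
    rw [Substructure.closure_eq_of_isRelational, Set.image_inter_preimage,
      Set.inter_eq_right.2 hA']
  have hC'fin : (C' : Set N).Finite :=
    have : Finite C := Set.finite_coe_iff.2 hCfin
    Set.finite_coe_iff.1 (Finite.of_equiv C σ.symm.toEquiv)
  let e : A₀' ↪[L'] N := C.subtype.comp (σ.toEmbedding.comp (Substructure.inclusion hA₀'C'))
  have he : Set.range e ⊆ Set.range g := by
    rintro _ ⟨z, rfl⟩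
    exact hC (σ _).2
  exact ⟨A₀', hA₀'C', hsr.nonempty_equiv_of_embedding_range_subset hA₀ (hC'fin.subset hA₀'C')
    e he hfA₀'.symm τ, hfA₀'⟩

end IsSemiRetraction

end

theorem semiRetraction_transfers_Ramsey_degree_relational_general
    {L L' : FirstOrder.Language} [L.IsRelational] [L'.IsRelational]
    {M N : Type*} [L.Structure M] [L'.Structure N]
    (g : M → N) (f : N → M)
    (hsr : IsSemiRetraction L L' M N g f)
    (A : L.Substructure M)
    (A₀ : L'.Substructure N) (hA₀ : (A₀ : Set N) = g '' (A : Set M))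
    (d : ℕ)
    (hdeg : ∀ C : L'.Substructure N, (C : Set N).Finite → ∀ r : ℕ, 2 ≤ r →
      ArrowSub L' N A₀ C r d) :
    ∀ B : L.Substructure M, (B : Set M).Finite → ∀ r : ℕ, 2 ≤ r →
      ArrowSub L M A B r d := by
  intro B hB r hr c
  set C := Substructure.closure L' (g '' B)
  have hC : (C : Set N) = g '' B := Substructure.closure_eq_of_isRelational L' _
  have hCfin : (C : Set N).Finite := hC ▸ hB.image g
  obtain ⟨C', ⟨σ⟩, hcard⟩ := hdeg C hCfin r hr fun S => c (Substructure.closure L (f '' S))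
  set B' := Substructure.closure L (f '' C')
  have hB' : (B' : Set M) = f '' C' := Substructure.closure_eq_of_isRelational L _
  refine ⟨B', hsr.nonempty_equiv_of_equiv_image hB hC σ hB',
    (Set.ncard_le_ncard ?_ (Set.toFinite _)).trans hcard⟩
  rintro _ ⟨A', ⟨hA'B', ⟨τ⟩⟩, rfl⟩
  obtain ⟨A₀', hA₀'C', hA₀'A₀, hfA₀'⟩ := hsr.exists_le_nonempty_equiv_image_eq hA₀ hCfin
    (hC ▸ Set.image_subset_range g B) σ (hB' ▸ hA'B') τ
  refine ⟨A₀', ⟨hA₀'C', hA₀'A₀⟩, ?_⟩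
  change c (Substructure.closure L (f '' A₀')) = c A'
  rw [hfA₀', Substructure.closure_eq]

/-- Theorem 5.8 / `fmla_free_relational`: for relational languages, if `𝒜` is a
semi-retract of `ℬ` via `(g, f)`, `A` is a finite substructure of `𝒜` and the substructure `A₀`
of `ℬ` with underlying set `g(A)` has Ramsey degree at most `d` in `ℬ`, then `A` has Ramsey
degree at most `d` in `𝒜`. -/
theorem semiRetraction_transfers_Ramsey_degree_relational
    {L L' : FirstOrder.Language} [L.IsRelational] [L'.IsRelational]
    {M N : Type*} [L.Structure M] [L'.Structure N]
    (g : M → N) (f : N → M)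
    (hsr : IsSemiRetraction L L' M N g f)
    (A : L.Substructure M) (hAfin : (A : Set M).Finite)
    (A₀ : L'.Substructure N) (hA₀ : (A₀ : Set N) = g '' (A : Set M))
    (d : ℕ) (hd : 1 ≤ d)
    (hdeg : ∀ C : L'.Substructure N, (C : Set N).Finite → ∀ r : ℕ, 2 ≤ r →
      ArrowSub L' N A₀ C r d) :
    ∀ B : L.Substructure M, (B : Set M).Finite → ∀ r : ℕ, 2 ≤ r →
      ArrowSub L M A B r d :=
  semiRetraction_transfers_Ramsey_degree_relational_general g f hsr A A₀ hA₀ d hdeg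
end

section
/- Let M be a locally finite L-structure and let A, B be finite substructures of M. Then the following are equivalent: (a) for every integer r ≥ 2 there exists a finite substructure C of M such that C → (B)^A_r; (b) for every integer r ≥ 2, M → (B)^A_r. (That is, (A, B) is a Ramsey duo for age(M) if and only if (A, B) is a Ramsey duo for M.) -/
open FirstOrder FirstOrder.Language

/-- `C → (B)^A_r` computed inside the substructure `C` of `M`: every coloring of copies of `A`
lying in `C` admits a copy `B'` of `B` inside `C` on whose copies of `A` the coloring is
constant (takes at most one color). -/
def ArrowSubIn (L : FirstOrder.Language) (M : Type*) [L.Structure M]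
    (C A B : L.Substructure M) (r d : ℕ) : Prop :=
  ∀ c : L.Substructure M → Fin r, ∃ B' : L.Substructure M, B' ≤ C ∧
    Nonempty (B' ≃[L] B) ∧
      (c '' {A' : L.Substructure M | A' ≤ B' ∧ Nonempty (A' ≃[L] A)}).ncard ≤ d

/-! The nontrivial direction is a compactness argument. If every finitely generated `C ⊆ M`
carries a bad colouring `c_C`, take an ultrafilter `U` on the finitely generated substructures
containing every up-set `{C | C₀ ≤ C}`, and let `c` be the `U`-limit of the `c_C`, which exists
since there are finitely many colours. A copy `B'` of `B` on which `c` is monochromatic is finite,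
so `U`-almost every `C` contains `B'` and agrees with `c` on all of its finitely many
substructures; such a `c_C` is monochromatic on `B'`, a contradiction. -/

namespace FirstOrder.Language.Substructure

variable {L : FirstOrder.Language} {M : Type*} [L.Structure M]

instance : IsDirectedOrder {S : L.Substructure M // S.FG} :=
  ⟨fun S T =>
    ⟨⟨S.1 ⊔ T.1, S.2.sup T.2⟩, le_sup_left (a := S.1), le_sup_right (a := S.1)⟩⟩

theorem fg_of_finite {S : L.Substructure M} (hS : (S : Set M).Finite) : S.FG :=
  have : Finite S := hS
  FG.of_finite

theorem finite_setOf_le {S : L.Substructure M} (hS : (S : Set M).Finite) :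
    {T : L.Substructure M | T ≤ S}.Finite :=
  (hS.finite_subsets.preimage SetLike.coe_injective.injOn).subset fun _ hT =>
    SetLike.coe_subset_coe.2 hT

end FirstOrder.Language.Substructure

theorem Ultrafilter.exists_eventually_eq {ι α β : Type*} [Finite β] (U : Ultrafilter ι)
    (f : ι → α → β) : ∃ g : α → β, ∀ a, ∀ᶠ i in U, f i a = g a := by
  choose g hg using fun a => (U.map (f · a)).eq_pure_of_finite
  refine ⟨g, fun a => show {g a} ∈ U.map (f · a) from ?_⟩
  rw [hg a]
  exact Ultrafilter.mem_pure.2 rfl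

section

variable {L : FirstOrder.Language} {M : Type*} [L.Structure M]

theorem ArrowSubIn.arrowSub {C A B : L.Substructure M} {r d : ℕ}
    (h : ArrowSubIn L M C A B r d) : ArrowSub L M A B r d := fun c =>
  let ⟨B', _, hB', hc⟩ := h c
  ⟨B', hB', hc⟩

theorem ArrowSub.exists_fg_arrowSubIn {A B : L.Substructure M} {r d : ℕ}
    (hB : (B : Set M).Finite) (h : ArrowSub L M A B r d) :
    ∃ C : L.Substructure M, C.FG ∧ ArrowSubIn L M C A B r d := by
  by_contra! hnone
  have : ∀ C : {C : L.Substructure M // C.FG}, ∃ c : L.Substructure M → Fin r,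
      ∀ B' ≤ C.1, Nonempty (B' ≃[L] B) →
        d < (c '' {A' : L.Substructure M | A' ≤ B' ∧ Nonempty (A' ≃[L] A)}).ncard := by
    intro C
    simpa [ArrowSubIn] using hnone C.1 C.2
  choose bad hbad using this
  let U : Ultrafilter {C : L.Substructure M // C.FG} := .of Filter.atTop
  obtain ⟨c, hc⟩ := U.exists_eventually_eq bad
  obtain ⟨B', ⟨e⟩, hB'⟩ := h c
  have hB'fin : (B' : Set M).Finite := by
    have : Finite B := hB
    exact Finite.of_equiv B e.symm.toEquiv
  let B'fg : {C : L.Substructure M // C.FG} := ⟨B', Substructure.fg_of_finite hB'fin⟩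
  have hcontains : ∀ᶠ C in U, B'fg ≤ C :=
    Ultrafilter.of_le _ (Filter.eventually_ge_atTop B'fg)
  have hagree : ∀ᶠ C in U, ∀ S ∈ {S : L.Substructure M | S ≤ B'}, bad C S = c S :=
    (Filter.eventually_all_finite (Substructure.finite_setOf_le hB'fin)).2 fun S _ => hc S
  obtain ⟨C, hle, hagree⟩ := (hcontains.and hagree).exists
  refine (hbad C B' hle ⟨e⟩).not_ge ?_
  rwa [Set.image_congr fun A' hA' => hagree A' hA'.1]

end

theorem ramsey_duo_age_iff_ramsey_duo_general
    {L : FirstOrder.Language} {M : Type*} [L.Structure M]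
    (hlf : StructLocallyFinite L M)
    (A B : L.Substructure M) (hBfin : (B : Set M).Finite) :
    (∀ r : ℕ, 2 ≤ r → ∃ C : L.Substructure M, (C : Set M).Finite ∧ ArrowSubIn L M C A B r 1) ↔
      (∀ r : ℕ, 2 ≤ r → ArrowSub L M A B r 1) := by
  refine ⟨fun h r hr => ?_, fun h r hr => ?_⟩
  · obtain ⟨C, -, hC⟩ := h r hr
    exact hC.arrowSub
  · obtain ⟨C, hfg, hC⟩ := (h r hr).exists_fg_arrowSubIn hBfin
    exact ⟨C, hlf C hfg, hC⟩

/-- Proposition 2.17 / `compactness_duo`: for a locally finite structure `M`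
and finite substructures `A, B` of `M`, `(A, B)` is a Ramsey duo for `age(M)` if and only if
`(A, B)` is a Ramsey duo for `M`. -/
theorem ramsey_duo_age_iff_ramsey_duo
    {L : FirstOrder.Language} {M : Type*} [L.Structure M]
    (hlf : StructLocallyFinite L M)
    (A B : L.Substructure M) (hAfin : (A : Set M).Finite) (hBfin : (B : Set M).Finite) :
    (∀ r : ℕ, 2 ≤ r → ∃ C : L.Substructure M, (C : Set M).Finite ∧ ArrowSubIn L M C A B r 1) ↔
      (∀ r : ℕ, 2 ≤ r → ArrowSub L M A B r 1) :=
  ramsey_duo_age_iff_ramsey_duo_general hlf A B hBfin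
end
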